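/- Let g = gcd(a₁, a₂) = a_{k+1} and L = lcm(a₂, …, a_{k+1}). Restricting to the solvable instances, i.e., to those c ∈ {1, …, L} with g ∣ c, one has R(c) ≤ k for every such c, and Σ_{c ∈ {1,…,L}, g ∣ c} R(c) ≤ Σ_{i=1}^{k} i·(L/a_{i+1}); in particular (1/L)·Σ_{c ∈ {1,…,L}, g ∣ c} R(c) ≤ Σ_{i=1}^{k} i/a_{i+1}. -/

import Mathlib

open scoped Classical

/-- The number of recursive calls made by the DEA-R algorithm on input `(a 1, a 2, c)`,
where `a 1, a 2, …, a (k+2)` is the Euclidean remainder sequence: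
the least `i ∈ {1,…,k}` with `a (i+1) ∣ (c - a i)` if one exists, and `k+1` otherwise. -/
noncomputable def DEA_R (a : ℕ → ℕ) (k : ℕ) (c : ℤ) : ℕ :=
  if ∃ i, 1 ≤ i ∧ i ≤ k ∧ (a (i + 1) : ℤ) ∣ (c - (a i : ℤ))
  then sInf {i | 1 ≤ i ∧ i ≤ k ∧ (a (i + 1) : ℤ) ∣ (c - (a i : ℤ))}
  else k + 1

/-! The gcd is invariant along the remainder sequence, so `gcd (a 1) (a 2) = a (k + 1)`, which
divides `a k`; hence every solvable `c` satisfies the stopping test at `i = k` and `R c ≤ k`.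
Every `c` with `R c = i` lies in a single residue class mod `a (i + 1)`, which divides `L`, so at
most `L / a (i + 1)` of the `c ∈ {1, …, L}` have `R c = i`. -/

open Finset

theorem card_Ioc_filter_modEq_of_dvd {m L : ℕ} (hmL : m ∣ L) (v : ℕ) :
    #{x ∈ Ioc 0 L | x ≡ v [MOD m]} = L / m := by
  rcases m.eq_zero_or_pos with rfl | hm
  · simp [zero_dvd_iff.mp hmL]
  obtain ⟨q, rfl⟩ := hmL
  have hshift : ((m * q : ℕ) - v : ℚ) / m = q + ((0 : ℕ) - v) / m := by
    field_simp
    push_cast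
    ring
  rw [Nat.mul_div_cancel_left q hm, ← Nat.cast_inj (R := ℤ),
    Nat.Ioc_filter_modEq_card 0 (m * q) hm v, hshift, ← Int.cast_natCast q, Int.floor_intCast_add]
  simp

theorem sum_le_sum_mul_div_of_modEq {S t : Finset ℕ} {L : ℕ} {f m r : ℕ → ℕ}
    (hS : S ⊆ Ioc 0 L) (hf : ∀ c ∈ S, f c ∈ t) (hmod : ∀ c ∈ S, c ≡ r (f c) [MOD m (f c)])
    (hmL : ∀ i ∈ t, m i ∣ L) :
    ∑ c ∈ S, f c ≤ ∑ i ∈ t, i * (L / m i) := by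
  rw [← sum_fiberwise_of_maps_to' hf fun i ↦ i]
  refine sum_le_sum fun i hi ↦ ?_
  rw [sum_const, smul_eq_mul, mul_comm]
  gcongr
  calc #{c ∈ S | f c = i} ≤ #{x ∈ Ioc 0 L | x ≡ r i [MOD m i]} := by
        refine card_le_card fun c hc ↦ ?_
        obtain ⟨hcS, rfl⟩ := mem_filter.1 hc
        exact mem_filter.2 ⟨hS hcS, hmod c hcS⟩
    _ = L / m i := card_Ioc_filter_modEq_of_dvd (hmL i hi) _

theorem cast_sum_mul_div_le (t : Finset ℕ) (m : ℕ → ℕ) (L : ℕ) :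
    ((∑ i ∈ t, i * (L / m i) : ℕ) : ℚ) ≤ (∑ i ∈ t, (i : ℚ) / m i) * L := by
  push_cast
  rw [sum_mul]
  refine sum_le_sum fun i _ ↦ ?_
  calc (i : ℚ) * ((L / m i : ℕ) : ℚ) ≤ i * (L / m i) := by gcongr; exact Nat.cast_div_le
    _ = i / m i * L := by ring

section RemainderSequence

variable {a : ℕ → ℕ} {k : ℕ}

theorem gcd_remainder_seq_eq (hrec : ∀ i, 1 ≤ i → i ≤ k → a (i + 2) = a i % a (i + 1))
    {i : ℕ} (hi : 1 ≤ i) (hik : i ≤ k + 1) :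
    Nat.gcd (a i) (a (i + 1)) = Nat.gcd (a 1) (a 2) := by
  induction i, hi using Nat.le_induction with
  | base => rfl
  | succ i hi ih =>
    rw [← ih (by omega), hrec i hi (by omega), Nat.gcd_comm (a i), Nat.gcd_rec (a (i + 1)) (a i)]
    exact Nat.gcd_comm _ _

theorem gcd_eq_last_of_remainder_seq (hrec : ∀ i, 1 ≤ i → i ≤ k → a (i + 2) = a i % a (i + 1))
    (hzero : a (k + 2) = 0) :
    Nat.gcd (a 1) (a 2) = a (k + 1) := by
  rw [← gcd_remainder_seq_eq hrec (by omega) le_rfl, hzero, Nat.gcd_zero_right]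

theorem DEA_R_spec_of_dvd {c : ℤ} {i : ℕ} (hi : 1 ≤ i) (hik : i ≤ k)
    (hdvd : (a (i + 1) : ℤ) ∣ c - a i) :
    1 ≤ DEA_R a k c ∧ DEA_R a k c ≤ k ∧ (a (DEA_R a k c + 1) : ℤ) ∣ c - a (DEA_R a k c) := by
  have hex : ∃ i, 1 ≤ i ∧ i ≤ k ∧ (a (i + 1) : ℤ) ∣ c - a i := ⟨i, hi, hik, hdvd⟩
  rw [DEA_R, if_pos hex]
  exact Nat.sInf_mem hex

theorem DEA_R_spec_of_gcd_dvd (hk : 1 ≤ k)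
    (hrec : ∀ i, 1 ≤ i → i ≤ k → a (i + 2) = a i % a (i + 1)) (hzero : a (k + 2) = 0)
    {c : ℤ} (hc : (Nat.gcd (a 1) (a 2) : ℤ) ∣ c) :
    1 ≤ DEA_R a k c ∧ DEA_R a k c ≤ k ∧ (a (DEA_R a k c + 1) : ℤ) ∣ c - a (DEA_R a k c) := by
  have hlast : a (k + 1) ∣ a k := Nat.dvd_of_mod_eq_zero (hrec k hk le_rfl ▸ hzero)
  rw [gcd_eq_last_of_remainder_seq hrec hzero] at hc
  exact DEA_R_spec_of_dvd hk le_rfl (dvd_sub hc (Int.natCast_dvd_natCast.2 hlast))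

end RemainderSequence

theorem DEA_R_sum_over_solvable_le_general
    (a : ℕ → ℕ) (k : ℕ) (hk : 1 ≤ k)
    (hrec : ∀ i, 1 ≤ i → i ≤ k → a (i + 2) = a i % a (i + 1))
    (hzero : a (k + 2) = 0)
    (L : ℕ) (hL : L = (Finset.Icc 2 (k + 1)).lcm a)
    :
    (∀ c ∈ Finset.Icc 1 L, Nat.gcd (a 1) (a 2) ∣ c → DEA_R a k (c : ℤ) ≤ k) ∧
    (∑ c ∈ (Finset.Icc 1 L).filter (fun c => Nat.gcd (a 1) (a 2) ∣ c), DEA_R a k (c : ℤ))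
        ≤ ∑ i ∈ Finset.Icc 1 k, i * (L / a (i + 1)) ∧
    (∑ c ∈ (Finset.Icc 1 L).filter (fun c => Nat.gcd (a 1) (a 2) ∣ c),
        (DEA_R a k (c : ℤ) : ℚ)) / (L : ℚ)
      ≤ ∑ i ∈ Finset.Icc 1 k, (i : ℚ) / (a (i + 1) : ℚ) := by
  have hspec (c : ℕ) (hc : Nat.gcd (a 1) (a 2) ∣ c) :=
    DEA_R_spec_of_gcd_dvd hk hrec hzero (c := c) (Int.natCast_dvd_natCast.2 hc)
  have hdvdL : ∀ i ∈ Icc 1 k, a (i + 1) ∣ L := fun i hi ↦ by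
    rw [mem_Icc] at hi
    exact hL ▸ dvd_lcm (mem_Icc.2 ⟨by omega, by omega⟩)
  have hsum : ∑ c ∈ (Icc 1 L).filter (fun c => Nat.gcd (a 1) (a 2) ∣ c), DEA_R a k c
      ≤ ∑ i ∈ Icc 1 k, i * (L / a (i + 1)) := by
    refine sum_le_sum_mul_div_of_modEq (r := a) (m := fun i ↦ a (i + 1))
      (Icc_add_one_left_eq_Ioc 0 L ▸ filter_subset _ _) (fun c hc ↦ ?_) (fun c hc ↦ ?_) hdvdL
    · obtain ⟨hone, hle, -⟩ := hspec c (mem_filter.1 hc).2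
      exact mem_Icc.2 ⟨hone, hle⟩
    · exact (Nat.modEq_iff_dvd.2 (hspec c (mem_filter.1 hc).2).2.2).symm
  refine ⟨fun c _ hc ↦ (hspec c hc).2.1, hsum, ?_⟩
  rcases L.eq_zero_or_pos with hL0 | hLpos
  · rw [hL0, Nat.cast_zero, div_zero]
    exact sum_nonneg fun i _ ↦ by positivity
  rw [div_le_iff₀ (by exact_mod_cast hLpos)]
  exact_mod_cast (Nat.cast_le.2 hsum).trans (cast_sum_mul_div_le _ _ _)

/-- Restricting to solvable instances `c ∈ {1, …, L}` with `g = gcd (a 1) (a 2) ∣ c`: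
every such `c` has `R c ≤ k`, the total `Σ R c` over them is at most
`Σ_{i=1}^{k} i·(L / a (i+1))`, and hence `(1/L)·Σ R c ≤ Σ_{i=1}^{k} i / a (i+1)`. -/
theorem DEA_R_sum_over_solvable_le
    (a : ℕ → ℕ) (k : ℕ) (hk : 1 ≤ k)
    (hb : 1 ≤ a 2) (hab : a 2 < a 1)
    (hrec : ∀ i, 1 ≤ i → i ≤ k → a (i + 2) = a i % a (i + 1))
    (hpos : 0 < a (k + 1)) (hzero : a (k + 2) = 0)
    (L : ℕ) (hL : L = (Finset.Icc 2 (k + 1)).lcm a)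
    :
    (∀ c ∈ Finset.Icc 1 L, Nat.gcd (a 1) (a 2) ∣ c → DEA_R a k (c : ℤ) ≤ k) ∧
    (∑ c ∈ (Finset.Icc 1 L).filter (fun c => Nat.gcd (a 1) (a 2) ∣ c), DEA_R a k (c : ℤ))
        ≤ ∑ i ∈ Finset.Icc 1 k, i * (L / a (i + 1)) ∧
    (∑ c ∈ (Finset.Icc 1 L).filter (fun c => Nat.gcd (a 1) (a 2) ∣ c),
        (DEA_R a k (c : ℤ) : ℚ)) / (L : ℚ)
      ≤ ∑ i ∈ Finset.Icc 1 k, (i : ℚ) / (a (i + 1) : ℚ) :=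
  DEA_R_sum_over_solvable_le_general a k hk hrec hzero L hL
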